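/- Recovery of the matrix entries from the moments: with U the normalized vector of functionals satisfying U(z^j B_m) = 0 for j < m and U(z^m B_m) = C_m ⋯ C_0 (all C_k invertible), the blocks of J are determined by C_n = U(z^n B_n) · (U(z^{n-1} B_{n-1}))^{-1} for n ≥ 1, and B_n = (U(z^n B_{n-1}) − C_{n-1} U(z^{n-1} B_{n-2})) · (U(z^{n-1} B_{n-1}))^{-1} for n ≥ 1. -/
import Mathlib


open Polynomial Matrix

noncomputable section

/-- Auxiliary shifted sequence: `Paux (n+2) = P_n`. -/
def Paux (a b c : ℕ → ℂ) : ℕ → Polynomial ℂ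
  | 0 => 0
  | 1 => 0
  | 2 => 1
  | n + 3 =>
      (X - C (a (n + 1))) * Paux a b c (n + 2)
        - C (b n) * Paux a b c (n + 1) - C (c (n - 1)) * Paux a b c n

/-- The polynomials `P_n` of the four-term recurrence. -/
def Pp (a b c : ℕ → ℂ) (n : ℕ) : Polynomial ℂ := Paux a b c (n + 2)

/-- The vector polynomials `B_m = (P_{2m}, P_{2m+1})ᵀ`. -/
def Bv (a b c : ℕ → ℂ) (m : ℕ) : Fin 2 → Polynomial ℂ :=
  ![Pp a b c (2 * m), Pp a b c (2 * m + 1)]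

/-- `B_{k-1}`, with the convention `B_{-1} = 0`. -/
def Bvprev (a b c : ℕ → ℂ) : ℕ → Fin 2 → Polynomial ℂ
  | 0 => 0
  | m + 1 => Bv a b c m

/-- The block `B_n = [[a_{2n-1}, 1],[b_{2n-1}, a_{2n}]]` (used for `n ≥ 1`). -/
def Bblk (a b : ℕ → ℂ) (n : ℕ) : Matrix (Fin 2) (Fin 2) ℂ :=
  !![a (2 * n - 1), 1; b (2 * n - 1), a (2 * n)]

/-- The block `C_n = [[c_{2n-1}, b_{2n}],[0, c_{2n}]]` for `n ≥ 1`, with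
`C_0 = [[1,0],[−a_1,1]]`. -/
def Cblk (a b c : ℕ → ℂ) (n : ℕ) : Matrix (Fin 2) (Fin 2) ℂ :=
  if n = 0 then !![1, 0; -(a 1), 1]
  else !![c (2 * n - 1), b (2 * n); 0, c (2 * n)]

/-- The product `C_m C_{m-1} ⋯ C_0`. -/
def Cprod (a b c : ℕ → ℂ) : ℕ → Matrix (Fin 2) (Fin 2) ℂ
  | 0 => Cblk a b c 0
  | m + 1 => Cblk a b c (m + 1) * Cprod a b c m


lemma Paux_succ (a b c : ℕ → ℂ) (n : ℕ) :
    Paux a b c (n + 3) =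
      (X - C (a (n + 1))) * Paux a b c (n + 2)
        - C (b n) * Paux a b c (n + 1) - C (c (n - 1)) * Paux a b c n := by
  rw [Paux]

lemma Pp_rec (a b c : ℕ → ℂ) (n : ℕ) :
    X * Pp a b c (n + 1) =
      Pp a b c (n + 2) + C (a (n + 2)) * Pp a b c (n + 1)
        + C (b (n + 1)) * Pp a b c n + C (c n) * Paux a b c (n + 1) := by
  have h : Pp a b c (n + 2)
      = (X - C (a (n + 2))) * Pp a b c (n + 1) - C (b (n + 1)) * Pp a b c n
        - C (c n) * Paux a b c (n + 1) := Paux_succ a b c (n + 1)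
  rw [h]; ring

lemma vec_rec (a b c : ℕ → ℂ) (m : ℕ) :
    (fun i => X * Bv a b c m i) =
      (Bblk a b (m + 1)).map C *ᵥ Bv a b c m
        + (Cblk a b c m).map C *ᵥ Bvprev a b c m
        + ((!![0, 0; 1, 0] : Matrix (Fin 2) (Fin 2) ℂ)).map C *ᵥ Bv a b c (m + 1) := by
  cases m with
  | zero =>
    have q0 : Pp a b c 1 = (X - C (a 1)) * Pp a b c 0 - C (b 0) * Paux a b c 1
        - C (c 0) * Paux a b c 0 := Paux_succ a b c 0
    have q1 := Pp_rec a b c 0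
    have z1 : Paux a b c 0 = 0 := rfl
    have z2 : Paux a b c 1 = 0 := rfl
    have z3 : Pp a b c 0 = 1 := rfl
    simp only [z1, z2, z3, Nat.zero_add] at q0 q1
    funext i
    fin_cases i <;>
    · simp [Bv, Bvprev, Bblk, Cblk, mulVec, Fin.sum_univ_two, z3, Matrix.vecHead, Matrix.vecTail, Function.comp]
      first
        | linear_combination q0
        | linear_combination q1
        | linear_combination q0 + q1
        | linear_combination (-1 : Polynomial ℂ) * q0 - q1
        | linear_combination q0 - q1
        | linear_combination q1 - q0
        | linear_combination -q0
  | succ m =>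
    have e1 : 2 * (m + 2) - 1 = 2 * m + 3 := by omega
    have e2 : 2 * (m + 2) = 2 * m + 4 := by omega
    have e3 : 2 * (m + 1) - 1 = 2 * m + 1 := by omega
    have e4 : 2 * (m + 1) = 2 * m + 2 := by omega
    have e5 : 2 * (m + 1 + 1) - 1 = 2 * m + 3 := by omega
    have e6 : 2 * (m + 1 + 1) = 2 * m + 4 := by omega
    have r1 := Pp_rec a b c (2 * m + 1)
    have r2 := Pp_rec a b c (2 * m + 2)
    have p1 : Paux a b c (2 * m + 1 + 1) = Pp a b c (2 * m) := rfl
    have p2 : Paux a b c (2 * m + 2 + 1) = Pp a b c (2 * m + 1) := rfl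
    rw [p1] at r1
    rw [p2] at r2
    funext i
    fin_cases i <;>
    · simp [Bv, Bvprev, Bblk, Cblk, mulVec, Fin.sum_univ_two, e1, e2, e3, e4, e5, e6, Matrix.vecHead, Matrix.vecTail, Function.comp]
      first
        | linear_combination r1
        | linear_combination r2

lemma Cprod_det_ne (a b c : ℕ → ℂ) (hc : ∀ n : ℕ, 1 ≤ n → c n ≠ 0) :
    ∀ m : ℕ, (Cprod a b c m).det ≠ 0 := by
  intro m
  induction m with
  | zero => simp [Cprod, Cblk, Matrix.det_fin_two_of]
  | succ m ih =>
    have h1 : c (2 * (m + 1) - 1) ≠ 0 := hc _ (by omega)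
    have h2 : c (2 * (m + 1)) ≠ 0 := hc _ (by omega)
    simp only [Cprod, Matrix.det_mul, Cblk, if_neg (Nat.succ_ne_zero m),
      Matrix.det_fin_two_of]
    simp only [mul_zero, sub_zero]
    exact mul_ne_zero (mul_ne_zero h1 h2) ih

lemma Ustep (a b c : ℕ → ℂ)
    (U : (Fin 2 → Polynomial ℂ) →ₗ[ℂ] Matrix (Fin 2) (Fin 2) ℂ)
    (hM2 : ∀ (A : Matrix (Fin 2) (Fin 2) ℂ) (Q : Fin 2 → Polynomial ℂ),
      U (A.map C *ᵥ Q) = A * U Q) (k : ℕ) :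
    U (fun i => X ^ (k + 1) * Bv a b c k i) =
      Bblk a b (k + 1) * U (fun i => X ^ k * Bv a b c k i)
        + Cblk a b c k * U (fun i => X ^ k * Bvprev a b c k i)
        + (!![0, 0; 1, 0] : Matrix (Fin 2) (Fin 2) ℂ)
            * U (fun i => X ^ k * Bv a b c (k + 1) i) := by
  have h : (fun i => X ^ (k + 1) * Bv a b c k i)
      = (Bblk a b (k + 1)).map C *ᵥ (fun i => X ^ k * Bv a b c k i)
        + (Cblk a b c k).map C *ᵥ (fun i => X ^ k * Bvprev a b c k i)
        + ((!![0, 0; 1, 0] : Matrix (Fin 2) (Fin 2) ℂ)).map C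
            *ᵥ (fun i => X ^ k * Bv a b c (k + 1) i) := by
    funext i
    have hv := congrFun (vec_rec a b c k) i
    simp only [Pi.add_apply] at hv
    simp only [Pi.add_apply, mulVec, dotProduct, Fin.sum_univ_two, Matrix.map_apply]
    simp only [mulVec, dotProduct, Fin.sum_univ_two, Matrix.map_apply] at hv
    rw [pow_succ, mul_assoc, hv]
    ring
  rw [h, map_add, map_add, hM2, hM2, hM2]
/-- Recovery of the blocks of `J` from the moments of the normalized vector of
functionals `U`:
`C_n = U(z^n B_n) (U(z^{n-1} B_{n-1}))⁻¹` and
`B_n = (U(z^n B_{n-1}) − C_{n-1} U(z^{n-1} B_{n-2})) (U(z^{n-1} B_{n-1}))⁻¹`. -/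
theorem recovery_of_blocks (a b c : ℕ → ℂ) (hb0 : b 0 = 0) (hc0 : c 0 = 0)
    (hc : ∀ n : ℕ, 1 ≤ n → c n ≠ 0)
    (U : (Fin 2 → Polynomial ℂ) →ₗ[ℂ] Matrix (Fin 2) (Fin 2) ℂ)
    (hM2 : ∀ (A : Matrix (Fin 2) (Fin 2) ℂ) (Q : Fin 2 → Polynomial ℂ),
      U (A.map C *ᵥ Q) = A * U Q)
    (horth : ∀ m j : ℕ, j < m → U (fun i => X ^ j * Bv a b c m i) = 0)
    (hmom : ∀ m : ℕ, U (fun i => X ^ m * Bv a b c m i) = Cprod a b c m) :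
    ∀ n : ℕ, 1 ≤ n →
      Cblk a b c n =
        U (fun i => X ^ n * Bv a b c n i)
          * (U (fun i => X ^ (n - 1) * Bv a b c (n - 1) i))⁻¹ ∧
      Bblk a b n =
        (U (fun i => X ^ n * Bv a b c (n - 1) i)
            - Cblk a b c (n - 1) * U (fun i => X ^ (n - 1) * Bvprev a b c (n - 1) i))
          * (U (fun i => X ^ (n - 1) * Bv a b c (n - 1) i))⁻¹ := by
  rintro (_ | k) hn
  · omega
  have hdet := Cprod_det_ne a b c hc k
  have hsub : k + 1 - 1 = k := rfl
  have hstep := Ustep a b c U hM2 k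
  have horthk : U (fun i => X ^ k * Bv a b c (k + 1) i) = 0 := horth (k + 1) k (by omega)
  rw [horthk, mul_zero, add_zero, hmom k] at hstep
  constructor
  · rw [hsub, hmom, hmom]
    show Cblk a b c (k + 1) = Cblk a b c (k + 1) * Cprod a b c k * (Cprod a b c k)⁻¹
    rw [mul_assoc, Matrix.mul_nonsing_inv _ (isUnit_iff_ne_zero.mpr hdet), mul_one]
  · rw [hsub, hmom, hstep]
    rw [add_sub_cancel_right, mul_assoc, Matrix.mul_nonsing_inv _ (isUnit_iff_ne_zero.mpr hdet), mul_one]
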